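/- Let p be a prime and R a commutative ring. Let X(t) = Σ_{n≥0} x_n t^n ∈ R[[t]] with x_0 = 1. Let U be the p-singular part of X and V the p-regular part of X; since U has constant term 1 it is invertible, and we set Y(t) = V(t)·U(t)^{-1} = Σ_{n≥0} y_n t^n. Then for every n ≥ 1, the element y_n − x_n lies in the ℤ-submodule of R spanned by the products x_{λ_1}·x_{λ_2}···x_{λ_k} over all finite tuples (λ_1,…,λ_k) of positive integers with λ_1 + ⋯ + λ_k = n and with at least one λ_i divisible by p. -/

import Mathlib

open PowerSeries

/-- The `p`-singular part of a power series `F = Σ fₙ tⁿ`, namely `Σ_{p ∣ n} fₙ tⁿ`. -/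
noncomputable def pSingularPart {R : Type*} [CommRing R] (p : ℕ) (F : PowerSeries R) :
    PowerSeries R :=
  PowerSeries.mk fun n => if p ∣ n then PowerSeries.coeff n F else 0

/-- The `p`-regular part of a power series `F = Σ fₙ tⁿ`, namely `Σ_{p ∤ n} fₙ tⁿ`. -/
noncomputable def pRegularPart {R : Type*} [CommRing R] (p : ℕ) (F : PowerSeries R) :
    PowerSeries R :=
  PowerSeries.mk fun n => if p ∣ n then 0 else PowerSeries.coeff n F

/-- `exp C = Σ_{k≥0} Cᵏ/k!` for a power series `C` with zero constant term over a
commutative `ℚ`-algebra.  (When the constant term of `C` is zero, `coeff n (C ^ k) = 0`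
for `k > n`, so the truncated sum below computes the full exponential.) -/
noncomputable def psExp {R : Type*} [CommRing R] [Algebra ℚ R] (C : PowerSeries R) :
    PowerSeries R :=
  PowerSeries.mk fun n => ∑ k ∈ Finset.range (n + 1),
    ((k.factorial : ℚ)⁻¹) • PowerSeries.coeff n (C ^ k)

/-!
Put `Z = 1 + Y`. Since `X = U + V`, the relation `Y U = V` reads `Z U = X`, that is
`Z - X = -Z (U - 1)`. The series `U - 1` has only the coefficients `x_j` with `p ∣ j > 0`, so
`z_n - x_n = -∑ z_i x_j` over `i + j = n` with `p ∣ j > 0`. With `z_0 = 1` and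
`z_i = (z_i - x_i) + x_i` for `i > 0`, induction on `n` puts every term in the span: appending
a part to a composition keeps a part divisible by `p`, and `x_i x_j` comes from the composition
`(i, j)`.
-/

section PDivisibleCompositionSpan

variable {R : Type*} [CommRing R] (p : ℕ) (x : ℕ → R)

def pDivisibleCompositionSpan (n : ℕ) : Submodule ℤ R :=
  Submodule.span ℤ {r : R | ∃ l : List ℕ, (∀ i ∈ l, 0 < i) ∧ l.sum = n ∧ (∃ i ∈ l, p ∣ i) ∧
    r = (l.map x).prod}

variable {p x}

theorem prod_mem_pDivisibleCompositionSpan {l : List ℕ} (hpos : ∀ i ∈ l, 0 < i)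
    (hdvd : ∃ i ∈ l, p ∣ i) : (l.map x).prod ∈ pDivisibleCompositionSpan p x l.sum :=
  Submodule.subset_span ⟨l, hpos, rfl, hdvd, rfl⟩

theorem mul_mem_pDivisibleCompositionSpan_add {m k : ℕ} (hk : 0 < k) {r : R}
    (hr : r ∈ pDivisibleCompositionSpan p x m) :
    r * x k ∈ pDivisibleCompositionSpan p x (m + k) := by
  induction hr using Submodule.span_induction with
  | mem r hr =>
    obtain ⟨l, hpos, rfl, hdvd, rfl⟩ := hr
    have hpos' : ∀ i ∈ l ++ [k], 0 < i := by
      simpa only [List.mem_append, List.mem_singleton, or_imp, forall_and, forall_eq] using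
        ⟨hpos, hk⟩
    have hdvd' : ∃ i ∈ l ++ [k], p ∣ i :=
      hdvd.imp fun i hi => ⟨List.mem_append_left _ hi.1, hi.2⟩
    simpa using prod_mem_pDivisibleCompositionSpan (x := x) hpos' hdvd'
  | zero => simp
  | add a b _ _ ha hb => simpa only [add_mul] using add_mem ha hb
  | smul z a _ ha => simpa only [smul_mul_assoc] using Submodule.smul_mem _ z ha

theorem mul_mem_pDivisibleCompositionSpan_of_sub_mem {i j : ℕ} (hi : 0 < i) (hj : 0 < j)
    (hpj : p ∣ j) {z : R} (hz : z - x i ∈ pDivisibleCompositionSpan p x i) :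
    z * x j ∈ pDivisibleCompositionSpan p x (i + j) := by
  rw [← sub_add_cancel z (x i), add_mul]
  refine add_mem (mul_mem_pDivisibleCompositionSpan_add hj hz) ?_
  have hpos : ∀ k ∈ [i, j], 0 < k := by simp [hi, hj]
  simpa using prod_mem_pDivisibleCompositionSpan (x := x) hpos ⟨j, by simp, hpj⟩

end PDivisibleCompositionSpan

section PowerSeries

variable {R : Type*} [CommRing R] (p : ℕ)

theorem coeff_pSingularPart (F : PowerSeries R) (n : ℕ) :
    coeff n (pSingularPart p F) = if p ∣ n then coeff n F else 0 :=
  coeff_mk _ _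

theorem constantCoeff_pSingularPart (F : PowerSeries R) :
    constantCoeff (pSingularPart p F) = constantCoeff F := by
  rw [← coeff_zero_eq_constantCoeff_apply, coeff_pSingularPart, if_pos (dvd_zero p),
    coeff_zero_eq_constantCoeff_apply]

theorem pSingularPart_add_pRegularPart (F : PowerSeries R) :
    pSingularPart p F + pRegularPart p F = F := by
  ext n
  simp only [map_add, pSingularPart, pRegularPart, coeff_mk]
  split_ifs <;> simp

theorem coeff_pSingularPart_sub_one {F : PowerSeries R} (hF : constantCoeff F = 1) (n : ℕ) :
    coeff n (pSingularPart p F - 1) = if p ∣ n ∧ 0 < n then coeff n F else 0 := by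
  rcases Nat.eq_zero_or_pos n with rfl | hn
  · simp [constantCoeff_pSingularPart, hF]
  · simp [coeff_pSingularPart, coeff_one, hn.ne', hn]

theorem coeff_sub_mem_pDivisibleCompositionSpan {X Z : PowerSeries R}
    (hX0 : constantCoeff X = 1) (hZ : Z * pSingularPart p X = X) {n : ℕ} (hn : 0 < n) :
    coeff n Z - coeff n X ∈ pDivisibleCompositionSpan p (fun i => coeff i X) n := by
  have hZ0 : constantCoeff Z = 1 := by
    simpa [constantCoeff_pSingularPart, hX0] using congrArg constantCoeff hZ
  induction n using Nat.strong_induction_on with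
  | _ n ih =>
  have hrec : coeff n Z - coeff n X =
      -∑ q ∈ Finset.HasAntidiagonal.antidiagonal n,
        coeff q.1 Z * coeff q.2 (pSingularPart p X - 1) := by
    have h : Z - X = -(Z * (pSingularPart p X - 1)) := by linear_combination hZ
    simpa only [map_sub, map_neg, coeff_mul] using congrArg (coeff n) h
  rw [hrec]
  refine neg_mem (sum_mem fun q hq => ?_)
  rw [Finset.HasAntidiagonal.mem_antidiagonal] at hq
  rw [coeff_pSingularPart_sub_one p hX0]
  split_ifs with hsupp
  · obtain ⟨hpj, hj⟩ := hsupp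
    rw [← hq]
    rcases Nat.eq_zero_or_pos q.1 with hi | hi
    · have hpos : ∀ k ∈ [q.2], 0 < k := by simpa using hj
      simpa [hi, coeff_zero_eq_constantCoeff_apply, hZ0] using
        prod_mem_pDivisibleCompositionSpan (x := fun i => coeff i X) hpos ⟨q.2, by simp, hpj⟩
    · exact mul_mem_pDivisibleCompositionSpan_of_sub_mem hi hj hpj (ih q.1 (by omega) hi)
  · simp

end PowerSeries

theorem stmt2_general (p : ℕ) (R : Type*) [CommRing R]
    (X Y : PowerSeries R)
    (hX0 : PowerSeries.constantCoeff X = 1)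
    (hY : Y * pSingularPart p X = pRegularPart p X) :
    ∀ n : ℕ, 1 ≤ n →
      PowerSeries.coeff n Y - PowerSeries.coeff n X ∈
        Submodule.span ℤ
          {r : R | ∃ l : List ℕ, (∀ i ∈ l, 0 < i) ∧ l.sum = n ∧ (∃ i ∈ l, p ∣ i) ∧
            r = (l.map fun i => PowerSeries.coeff i X).prod} := by
  intro n hn
  have hZ : (1 + Y) * pSingularPart p X = X := by
    rw [add_mul, one_mul, hY, pSingularPart_add_pRegularPart]
  have hcoeff : coeff n (1 + Y) = coeff n Y := by
    simp [coeff_one, Nat.one_le_iff_ne_zero.mp hn]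
  rw [← hcoeff]
  exact coeff_sub_mem_pDivisibleCompositionSpan p hX0 hZ hn

/-- over any commutative ring, if `X = Σ xₙ tⁿ` has `x₀ = 1`,
`U`/`V` are its `p`-singular/`p`-regular parts and `Y = V·U⁻¹ = Σ yₙ tⁿ`
(equivalently `Y·U = V`), then for `n ≥ 1`, `yₙ - xₙ` lies in the `ℤ`-span of the
products `x_{λ₁}⋯x_{λ_k}` over tuples of positive integers summing to `n`
with at least one part divisible by `p`. -/
theorem stmt2 (p : ℕ) (hp : p.Prime) (R : Type*) [CommRing R]
    (X Y : PowerSeries R)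
    (hX0 : PowerSeries.constantCoeff X = 1)
    (hY : Y * pSingularPart p X = pRegularPart p X) :
    ∀ n : ℕ, 1 ≤ n →
      PowerSeries.coeff n Y - PowerSeries.coeff n X ∈
        Submodule.span ℤ
          {r : R | ∃ l : List ℕ, (∀ i ∈ l, 0 < i) ∧ l.sum = n ∧ (∃ i ∈ l, p ∣ i) ∧
            r = (l.map fun i => PowerSeries.coeff i X).prod} :=
  stmt2_general p R X Y hX0 hY
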